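/- For 0 ≤ l ≤ r < n, let t ∈ {l,...,r} satisfy R_{lr}(x_t) = R_{lr} (i.e., x_t is a minimax-regret sink for the subpath [x_l, x_r] as assumed dominant part). Then there exists an index i with t ≤ i ≤ r+1 such that R_{l(r+1)}(x_i) = R_{l(r+1)}; i.e., when the subpath is extended to the right by one vertex, some minimax-regret sink lies at or to the right of x_t. -/

import Mathlib

/-- Maximum of `f` over a finite set of indices, with the empty maximum being `0`. -/
noncomputable def maxOver (S : Finset ℕ) (f : ℕ → ℝ) : ℝ := S.fold max 0 f

/-- Left evacuation time to sink `x t` of the subpath starting at `x l`, under weights `w`. -/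
noncomputable def thetaL (x : ℕ → ℝ) (τ : ℝ) (w : ℕ → ℝ) (l t : ℕ) : ℝ :=
  maxOver (Finset.Ico l t) (fun i => (x t - x i) * τ + ∑ j ∈ Finset.Icc l i, w j)

/-- Right evacuation time to sink `x t` of the subpath ending at `x r`, under weights `w`. -/
noncomputable def thetaR (x : ℕ → ℝ) (τ : ℝ) (w : ℕ → ℝ) (t r : ℕ) : ℝ :=
  maxOver (Finset.Ioc t r) (fun i => (x i - x t) * τ + ∑ j ∈ Finset.Icc i r, w j)

/-- 1-sink evacuation time `Θ¹([x_l,x_r], x_t, w)`. -/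
noncomputable def theta1 (x : ℕ → ℝ) (τ : ℝ) (w : ℕ → ℝ) (l t r : ℕ) : ℝ :=
  max (thetaL x τ w l t) (thetaR x τ w t r)

/-- A scenario assigns each vertex a weight within its bounds. -/
def IsScenario (n : ℕ) (wlo whi : ℕ → ℝ) (s : ℕ → ℝ) : Prop :=
  ∀ i, i ≤ n → wlo i ≤ s i ∧ s i ≤ whi i

/-- A `k`-partition-with-sinks of the vertex set `{0,…,n}` into `k` consecutive
nonempty blocks `{l p, …, r p}` (`p ∈ {1,…,k}`) with a sink `t p` in each block. -/
structure KPartSinks (n k : ℕ) where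
  l : ℕ → ℕ
  r : ℕ → ℕ
  t : ℕ → ℕ
  first : l 1 = 0
  last : r k = n
  consec : ∀ p, 1 ≤ p → p < k → l (p + 1) = r p + 1
  block_nonempty : ∀ p, 1 ≤ p → p ≤ k → l p ≤ r p
  sink_lb : ∀ p, 1 ≤ p → p ≤ k → l p ≤ t p
  sink_ub : ∀ p, 1 ≤ p → p ≤ k → t p ≤ r p

/-- `k`-sink evacuation time `Θᵏ(P, {P̂,Ŷ}, w)`. -/
noncomputable def thetaK {n k : ℕ} (x : ℕ → ℝ) (τ : ℝ) (PY : KPartSinks n k) (w : ℕ → ℝ) : ℝ :=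
  maxOver (Finset.Icc 1 k) (fun p => theta1 x τ w (PY.l p) (PY.t p) (PY.r p))

/-- Optimal `k`-sink evacuation time `Θᵏ_opt(P, w)`. -/
noncomputable def thetaOpt (x : ℕ → ℝ) (τ : ℝ) (n k : ℕ) (w : ℕ → ℝ) : ℝ :=
  sInf {v : ℝ | ∃ PY : KPartSinks n k, thetaK x τ PY w = v}

/-- Regret `R({P̂,Ŷ}, w)`. -/
noncomputable def regret {n k : ℕ} (x : ℕ → ℝ) (τ : ℝ) (PY : KPartSinks n k) (w : ℕ → ℝ) : ℝ :=
  thetaK x τ PY w - thetaOpt x τ n k w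

/-- Max-regret `R_max({P̂,Ŷ})`. -/
noncomputable def maxRegret {n k : ℕ} (x : ℕ → ℝ) (τ : ℝ) (wlo whi : ℕ → ℝ)
    (PY : KPartSinks n k) : ℝ :=
  sSup {v : ℝ | ∃ s : ℕ → ℝ, IsScenario n wlo whi s ∧ regret x τ PY s = v}

/-- A worst-case scenario: a scenario attaining the max-regret. -/
def IsWorstCase {n k : ℕ} (x : ℕ → ℝ) (τ : ℝ) (wlo whi : ℕ → ℝ) (PY : KPartSinks n k)
    (s : ℕ → ℝ) : Prop :=
  IsScenario n wlo whi s ∧ regret x τ PY s = maxRegret x τ wlo whi PY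

/-- `d` is the index of the dominant part of `{P̂,Ŷ}` under weights `w`:
the smallest index attaining `max_p Θ¹(P_p, y_p, w)`. -/
def IsDominant {n k : ℕ} (x : ℕ → ℝ) (τ : ℝ) (PY : KPartSinks n k) (w : ℕ → ℝ) (d : ℕ) : Prop :=
  1 ≤ d ∧ d ≤ k ∧
  (∀ p, 1 ≤ p → p ≤ k →
    theta1 x τ w (PY.l p) (PY.t p) (PY.r p) ≤ theta1 x τ w (PY.l d) (PY.t d) (PY.r d)) ∧
  (∀ p, 1 ≤ p → p < d →
    theta1 x τ w (PY.l p) (PY.t p) (PY.r p) < theta1 x τ w (PY.l d) (PY.t d) (PY.r d))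

/-- `R_{lr}(x_t)`: the max-regret of the subpath `[x_l,x_r]` as assumed dominant
part with sink `x_t`. -/
noncomputable def Rsink (x : ℕ → ℝ) (τ : ℝ) (wlo whi : ℕ → ℝ) (n k : ℕ) (l r t : ℕ) : ℝ :=
  sSup {v : ℝ | ∃ s : ℕ → ℝ, IsScenario n wlo whi s ∧
    theta1 x τ s l t r - thetaOpt x τ n k s = v}

/-- `R_{lr}`: the minimax regret of the subpath `[x_l,x_r]` as assumed dominant part. -/
noncomputable def Rlr (x : ℕ → ℝ) (τ : ℝ) (wlo whi : ℕ → ℝ) (n k : ℕ) (l r : ℕ) : ℝ :=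
  sInf {v : ℝ | ∃ t, l ≤ t ∧ t ≤ r ∧ Rsink x τ wlo whi n k l r t = v}

/-- A partition of `{0,…,i}` into `q` consecutive nonempty blocks `{l p, …, r p}`. -/
def IsQPartition (q i : ℕ) (l r : ℕ → ℕ) : Prop :=
  l 1 = 0 ∧ r q = i ∧ (∀ p, 1 ≤ p → p < q → l (p + 1) = r p + 1) ∧
  (∀ p, 1 ≤ p → p ≤ q → l p ≤ r p)

/-- `M(q, i)`: the minimum over partitions of `{0,…,i}` into `q` consecutive
nonempty blocks of `max_p R_{l_p r_p}`. -/
noncomputable def Mreg (x : ℕ → ℝ) (τ : ℝ) (wlo whi : ℕ → ℝ) (n k : ℕ) (q i : ℕ) : ℝ :=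
  sInf {v : ℝ | ∃ lf rf : ℕ → ℕ, IsQPartition q i lf rf ∧
    maxOver (Finset.Icc 1 q) (fun p => Rlr x τ wlo whi n k (lf p) (rf p)) = v}

/-- Left-dominant scenario on `{l,…,r}`. -/
def LeftDominant (wlo whi s : ℕ → ℝ) (l r : ℕ) : Prop :=
  ∃ i, l ≤ i ∧ i ≤ r + 1 ∧ (∀ j, l ≤ j → j < i → s j = whi j) ∧
    (∀ j, i ≤ j → j ≤ r → s j = wlo j)

/-- Right-dominant scenario on `{l,…,r}`. -/
def RightDominant (wlo whi s : ℕ → ℝ) (l r : ℕ) : Prop :=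
  ∃ i, l ≤ i ∧ i ≤ r + 1 ∧ (∀ j, l ≤ j → j < i → s j = wlo j) ∧
    (∀ j, i ≤ j → j ≤ r → s j = whi j)

/-!
Let `i` be a minimax-regret sink of the extended path `[x_l, x_{r+1}]`; if `t ≤ i` we are done,
so suppose `i < t`. Under every scenario, moving the sink from `x_i` right to `x_t` can only
shorten the right evacuation, while the left evacuation towards `x_t` does not see the new
vertex `r + 1`. Hence `Θ¹([x_l,x_{r+1}], x_t) ≤ max (Θ¹([x_l,x_{r+1}], x_i), Θ¹([x_l,x_r], x_t))`
scenario by scenario, and so `R_{l(r+1)}(x_t) ≤ max (R_{l(r+1)}(x_i), R_{lr}(x_t))`. Since `x_t`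
is optimal for `[x_l, x_r]` and adding a vertex of nonnegative weight only increases evacuation
times, `R_{lr}(x_t) ≤ R_{lr}(x_i) ≤ R_{l(r+1)}(x_i)`; thus `x_t` is optimal for the extended path.
-/

lemma maxOver_nonneg (S : Finset ℕ) (f : ℕ → ℝ) : 0 ≤ maxOver S f :=
  (Finset.le_fold_max _).2 (Or.inl le_rfl)

lemma le_maxOver {S : Finset ℕ} {f : ℕ → ℝ} {i : ℕ} (h : i ∈ S) : f i ≤ maxOver S f :=
  (Finset.le_fold_max _).2 (Or.inr ⟨i, h, le_rfl⟩)

lemma maxOver_le {S : Finset ℕ} {f : ℕ → ℝ} {B : ℝ} (hB : 0 ≤ B) (h : ∀ i ∈ S, f i ≤ B) :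
    maxOver S f ≤ B :=
  (Finset.fold_max_le _).2 ⟨hB, h⟩

lemma maxOver_mono {S T : Finset ℕ} {f g : ℕ → ℝ} (hST : S ⊆ T) (hfg : ∀ i ∈ S, f i ≤ g i) :
    maxOver S f ≤ maxOver T g :=
  maxOver_le (maxOver_nonneg T g) fun i hi => (hfg i hi).trans (le_maxOver (hST hi))

section Evacuation

variable {x : ℕ → ℝ} {τ : ℝ} {s s' : ℕ → ℝ} {l t r : ℕ}

lemma theta1_mono_weights {n : ℕ} (h : ∀ j ≤ n, s j ≤ s' j) (htn : t ≤ n) (hrn : r ≤ n) :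
    theta1 x τ s l t r ≤ theta1 x τ s' l t r := by
  refine max_le_max (maxOver_mono subset_rfl fun i hi => ?_)
    (maxOver_mono subset_rfl fun i hi => ?_)
  · rw [Finset.mem_Ico] at hi
    gcongr with j hj
    exact h j (by grind)
  · rw [Finset.mem_Ioc] at hi
    gcongr with j hj
    exact h j (by grind)

lemma theta1_le_theta1_succ_right (hs : 0 ≤ s (r + 1)) :
    theta1 x τ s l t r ≤ theta1 x τ s l t (r + 1) := by
  refine max_le_max le_rfl (maxOver_mono (Finset.Ioc_subset_Ioc_right r.le_succ) ?_)
  intro i hi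
  rw [Finset.mem_Ioc] at hi
  rw [Finset.sum_Icc_succ_top (by omega : i ≤ r + 1)]
  linarith

lemma thetaR_le_thetaR_of_le {u : ℕ} (hut : u ≤ t) (hτ : 0 ≤ τ) (hx : x u ≤ x t) :
    thetaR x τ s t r ≤ thetaR x τ s u r :=
  maxOver_mono (Finset.Ioc_subset_Ioc_left hut) fun _ _ => by gcongr

/-- The left part of `Θ¹` ignores the right endpoint, and the right part shrinks as the sink
moves right. -/
lemma theta1_le_max_theta1 {u r' : ℕ} (hut : u ≤ t) (hτ : 0 ≤ τ) (hx : x u ≤ x t) :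
    theta1 x τ s l t r ≤ max (theta1 x τ s l u r) (theta1 x τ s l t r') :=
  max_le ((le_max_left _ _).trans (le_max_right _ _))
    (((thetaR_le_thetaR_of_le hut hτ hx).trans (le_max_right _ _)).trans (le_max_left _ _))

lemma thetaOpt_nonneg (n k : ℕ) (s : ℕ → ℝ) : 0 ≤ thetaOpt x τ n k s :=
  Real.sInf_nonneg fun _ ⟨_, h⟩ => h ▸ maxOver_nonneg _ _

end Evacuation

section Regret

variable {x : ℕ → ℝ} {τ : ℝ} {wlo whi : ℕ → ℝ} {n k l r t : ℕ}

lemma le_Rsink {s : ℕ → ℝ} (hs : IsScenario n wlo whi s) (htn : t ≤ n) (hrn : r ≤ n) :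
    theta1 x τ s l t r - thetaOpt x τ n k s ≤ Rsink x τ wlo whi n k l r t := by
  refine le_csSup ⟨theta1 x τ whi l t r, ?_⟩ ⟨s, hs, rfl⟩
  rintro _ ⟨s', hs', rfl⟩
  calc theta1 x τ s' l t r - thetaOpt x τ n k s' ≤ theta1 x τ s' l t r :=
        sub_le_self _ (thetaOpt_nonneg n k s')
    _ ≤ theta1 x τ whi l t r := theta1_mono_weights (fun j hj => (hs' j hj).2) htn hrn

lemma Rsink_le {B : ℝ} (hw : ∀ i ≤ n, wlo i ≤ whi i)
    (h : ∀ s, IsScenario n wlo whi s → theta1 x τ s l t r - thetaOpt x τ n k s ≤ B) :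
    Rsink x τ wlo whi n k l r t ≤ B :=
  csSup_le ⟨_, wlo, fun i hi => ⟨le_rfl, hw i hi⟩, rfl⟩ fun _ ⟨s, hs, hv⟩ => hv ▸ h s hs

lemma Rsink_le_max {l₁ r₁ t₁ l₂ r₂ t₂ : ℕ} (hw : ∀ i ≤ n, wlo i ≤ whi i)
    (ht₁ : t₁ ≤ n) (hr₁ : r₁ ≤ n) (ht₂ : t₂ ≤ n) (hr₂ : r₂ ≤ n)
    (h : ∀ s, IsScenario n wlo whi s →
      theta1 x τ s l t r ≤ max (theta1 x τ s l₁ t₁ r₁) (theta1 x τ s l₂ t₂ r₂)) :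
    Rsink x τ wlo whi n k l r t ≤
      max (Rsink x τ wlo whi n k l₁ r₁ t₁) (Rsink x τ wlo whi n k l₂ r₂ t₂) := by
  refine Rsink_le hw fun s hs => ?_
  calc theta1 x τ s l t r - thetaOpt x τ n k s
      ≤ max (theta1 x τ s l₁ t₁ r₁) (theta1 x τ s l₂ t₂ r₂) - thetaOpt x τ n k s :=
        sub_le_sub_right (h s hs) _
    _ = max (theta1 x τ s l₁ t₁ r₁ - thetaOpt x τ n k s)
          (theta1 x τ s l₂ t₂ r₂ - thetaOpt x τ n k s) := (max_sub_sub_right ..).symm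
    _ ≤ _ := max_le_max (le_Rsink hs ht₁ hr₁) (le_Rsink hs ht₂ hr₂)

lemma Rsink_le_Rsink_succ_right (hw : ∀ i ≤ n, wlo i ≤ whi i) (hwr : 0 ≤ wlo (r + 1))
    (htn : t ≤ n) (hrn : r < n) :
    Rsink x τ wlo whi n k l r t ≤ Rsink x τ wlo whi n k l (r + 1) t :=
  Rsink_le hw fun _ hs =>
    (sub_le_sub_right (theta1_le_theta1_succ_right (hwr.trans (hs (r + 1) hrn).1)) _).trans
      (le_Rsink hs htn hrn)

lemma Rlr_eq_sInf_image (x : ℕ → ℝ) (τ : ℝ) (wlo whi : ℕ → ℝ) (n k l r : ℕ) :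
    Rlr x τ wlo whi n k l r = sInf ((Rsink x τ wlo whi n k l r) '' Set.Icc l r) := by
  simp only [Rlr, Set.image, Set.mem_Icc, and_assoc]

lemma Rlr_le_Rsink (hlt : l ≤ t) (htr : t ≤ r) :
    Rlr x τ wlo whi n k l r ≤ Rsink x τ wlo whi n k l r t := by
  rw [Rlr_eq_sInf_image]
  exact csInf_le ((Set.finite_Icc l r).image _).bddBelow ⟨t, ⟨hlt, htr⟩, rfl⟩

lemma exists_Rsink_eq_Rlr (hlr : l ≤ r) :
    ∃ t, l ≤ t ∧ t ≤ r ∧ Rsink x τ wlo whi n k l r t = Rlr x τ wlo whi n k l r := by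
  rw [Rlr_eq_sInf_image]
  obtain ⟨t, ⟨hlt, htr⟩, h⟩ := Set.Nonempty.csInf_mem
    ((Set.nonempty_Icc.2 hlr).image (Rsink x τ wlo whi n k l r)) ((Set.finite_Icc l r).image _)
  exact ⟨t, hlt, htr, h⟩

end Regret

theorem stmt_16_general (n k : ℕ) (x : ℕ → ℝ) (τ : ℝ) (wlo whi : ℕ → ℝ)
    (hx : ∀ i, i < n → x i < x (i + 1)) (hτ : 0 < τ)
    (hw : ∀ i, i ≤ n → 0 < wlo i ∧ wlo i ≤ whi i)
    (l r t : ℕ) (hrn : r < n) (hlt : l ≤ t) (htr : t ≤ r)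
    (hmin : Rsink x τ wlo whi n k l r t = Rlr x τ wlo whi n k l r) :
    ∃ i, t ≤ i ∧ i ≤ r + 1 ∧
      Rsink x τ wlo whi n k l (r + 1) i = Rlr x τ wlo whi n k l (r + 1) := by
  have hwlo : ∀ i ≤ n, wlo i ≤ whi i := fun i hi => (hw i hi).2
  obtain ⟨i, hli, hir, hi⟩ : ∃ i, l ≤ i ∧ i ≤ r + 1 ∧
      Rsink x τ wlo whi n k l (r + 1) i = Rlr x τ wlo whi n k l (r + 1) :=
    exists_Rsink_eq_Rlr (by omega)
  rcases le_or_gt t i with hti | hit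
  · exact ⟨i, hti, hir, hi⟩
  have hxit : x i ≤ x t := (strictMonoOn_Iic_of_lt_succ hx).monotoneOn
    (Set.mem_Iic.2 (by omega)) (Set.mem_Iic.2 (by omega)) hit.le
  refine ⟨t, le_rfl, by omega, le_antisymm ?_ (Rlr_le_Rsink hlt (by omega))⟩
  calc Rsink x τ wlo whi n k l (r + 1) t
      ≤ max (Rsink x τ wlo whi n k l (r + 1) i) (Rsink x τ wlo whi n k l r t) :=
        Rsink_le_max hwlo (by omega) hrn (by omega) hrn.le
          fun s _ => theta1_le_max_theta1 hit.le hτ.le hxit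
    _ ≤ Rsink x τ wlo whi n k l (r + 1) i := by
        refine max_le le_rfl ?_
        rw [hmin]
        exact (Rlr_le_Rsink hli (by omega)).trans
          (Rsink_le_Rsink_succ_right hwlo (hw (r + 1) hrn).1.le (by omega) hrn)
    _ = Rlr x τ wlo whi n k l (r + 1) := hi

/-- when a subpath is extended to the right by one vertex, some
minimax-regret sink lies at or to the right of the previous minimax-regret sink. -/
theorem stmt_16 (n k : ℕ) (x : ℕ → ℝ) (τ : ℝ) (wlo whi : ℕ → ℝ)
    (hx : ∀ i, i < n → x i < x (i + 1)) (hτ : 0 < τ)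
    (hw : ∀ i, i ≤ n → 0 < wlo i ∧ wlo i ≤ whi i) (hk : 1 ≤ k)
    (l r t : ℕ) (hlr : l ≤ r) (hrn : r < n) (hlt : l ≤ t) (htr : t ≤ r)
    (hmin : Rsink x τ wlo whi n k l r t = Rlr x τ wlo whi n k l r) :
    ∃ i, t ≤ i ∧ i ≤ r + 1 ∧
      Rsink x τ wlo whi n k l (r + 1) i = Rlr x τ wlo whi n k l (r + 1) :=
  stmt_16_general n k x τ wlo whi hx hτ hw l r t hrn hlt htr hmin
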